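/- Let V be a real Hilbert space with inner product a, let P₁,…,P_N be orthogonal projections onto closed subspaces satisfying the stable decomposition assumption with constant C₀ and the strengthened Cauchy–Schwarz assumption with matrix ℰ. Let P = Σᵢ Pᵢ and τ > 0. Then for every e ∈ V, a((I − τP)e, (I − τP)e) ≤ (1 − 2τ/(2+C₀) + ‖ℰ‖₂² τ²) a(e,e). -/

import Mathlib

/-!
Write `p = ∑ i, Pᵢ e`, so that `‖e - τ p‖² = ‖e‖² - 2τ⟪e, p⟫ + τ²‖p‖²` and `⟪e, p⟫ = ∑ ‖Pᵢ e‖²`.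
Testing `e` against a stable decomposition `e = ∑ vᵢ` gives
`‖e‖² = ∑ ⟪Pᵢ e, vᵢ⟫ ≤ (∑ ‖Pᵢ e‖²)^½ (C₀ ‖e‖²)^½`, i.e. `‖e‖² ≤ C₀ ⟪e, p⟫`.
The strengthened Cauchy–Schwarz inequality bounds `‖p‖²` by the quadratic form of `ℰ` at the
vector `(‖Pᵢ e‖)ᵢ`, hence by `‖ℰ‖₂ ⟪e, p⟫ ≤ ‖ℰ‖₂ ‖e‖ ‖p‖`, so that `‖p‖ ≤ ‖ℰ‖₂ ‖e‖`.
-/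

open RealInnerProductSpace Matrix

/-- Spectral norm (operator 2-norm) of a real matrix. -/
noncomputable def matSpectralNorm {N : ℕ} (E : Matrix (Fin N) (Fin N) ℝ) : ℝ :=
  ‖(Matrix.toEuclideanCLM (𝕜 := ℝ) E : EuclideanSpace ℝ (Fin N) →L[ℝ] EuclideanSpace ℝ (Fin N))‖

lemma matSpectralNorm_nonneg {N : ℕ} (E : Matrix (Fin N) (Fin N) ℝ) : 0 ≤ matSpectralNorm E :=
  norm_nonneg _

section

variable {V : Type*} [NormedAddCommGroup V] [InnerProductSpace ℝ V]

lemma real_inner_apply_self_le_opNorm_mul (A : V →L[ℝ] V) (x : V) : ⟪x, A x⟫ ≤ ‖A‖ * ‖x‖ ^ 2 :=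
  calc ⟪x, A x⟫ ≤ ‖x‖ * ‖A x‖ := real_inner_le_norm _ _
    _ ≤ ‖x‖ * (‖A‖ * ‖x‖) := by gcongr; exact A.le_opNorm x
    _ = ‖A‖ * ‖x‖ ^ 2 := by ring

lemma dotProduct_mulVec_le_matSpectralNorm_mul {N : ℕ} (E : Matrix (Fin N) (Fin N) ℝ)
    (u : Fin N → ℝ) : u ⬝ᵥ E *ᵥ u ≤ matSpectralNorm E * (u ⬝ᵥ u) := by
  have h := real_inner_apply_self_le_opNorm_mul (Matrix.toEuclideanCLM (𝕜 := ℝ) E)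
    (WithLp.toLp 2 u)
  rwa [Matrix.inner_toEuclideanCLM, ← real_inner_self_eq_norm_sq,
    EuclideanSpace.inner_toLp_toLp, star_trivial] at h

lemma norm_sum_sq_le_matSpectralNorm_mul {N : ℕ} (E : Matrix (Fin N) (Fin N) ℝ) (q : Fin N → V)
    (hCS : ∀ i j, ⟪q i, q j⟫ ≤ E i j * ‖q i‖ * ‖q j‖) :
    ‖∑ i, q i‖ ^ 2 ≤ matSpectralNorm E * ∑ i, ‖q i‖ ^ 2 := by
  set u : Fin N → ℝ := fun i => ‖q i‖
  calc ‖∑ i, q i‖ ^ 2 = ∑ i, ∑ j, ⟪q i, q j⟫ := by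
        rw [← real_inner_self_eq_norm_sq, sum_inner]
        simp only [inner_sum]
    _ ≤ ∑ i, ∑ j, E i j * ‖q i‖ * ‖q j‖ := by gcongr with i _ j _; exact hCS i j
    _ = u ⬝ᵥ E *ᵥ u := by
        simp only [dotProduct, mulVec, Finset.mul_sum, u]
        exact Finset.sum_congr rfl fun _ _ => Finset.sum_congr rfl fun _ _ => by ring
    _ ≤ matSpectralNorm E * (u ⬝ᵥ u) := dotProduct_mulVec_le_matSpectralNorm_mul E u
    _ = matSpectralNorm E * ∑ i, ‖q i‖ ^ 2 := by simp only [dotProduct, u, sq]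

section Projections

variable {ι : Type*} [Fintype ι] {Vs : ι → Submodule ℝ V} {e : V} {q : ι → V}

lemma inner_sum_eq_sum_norm_sq_of_proj (hq : ∀ i, q i ∈ Vs i)
    (hproj : ∀ i, ∀ w ∈ Vs i, ⟪q i, w⟫ = ⟪e, w⟫) :
    ⟪e, ∑ i, q i⟫ = ∑ i, ‖q i‖ ^ 2 := by
  rw [inner_sum]
  exact Finset.sum_congr rfl fun i _ => by rw [← hproj i _ (hq i), real_inner_self_eq_norm_sq]

lemma norm_sq_le_mul_sum_norm_sq_of_decomp (hproj : ∀ i, ∀ w ∈ Vs i, ⟪q i, w⟫ = ⟪e, w⟫)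
    {C : ℝ} (hC : 0 ≤ C) (v : ι → V) (hv : ∀ i, v i ∈ Vs i) (hev : e = ∑ i, v i)
    (hvC : ∑ i, ‖v i‖ ^ 2 ≤ C * ‖e‖ ^ 2) :
    ‖e‖ ^ 2 ≤ C * ∑ i, ‖q i‖ ^ 2 := by
  set S := ∑ i, ‖q i‖ ^ 2
  have hS : 0 ≤ S := by positivity
  have hlin : ‖e‖ ^ 2 ≤ ∑ i, ‖q i‖ * ‖v i‖ :=
    calc ‖e‖ ^ 2 = ⟪e, ∑ i, v i⟫ := by rw [← hev, real_inner_self_eq_norm_sq]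
      _ = ∑ i, ⟪q i, v i⟫ := by
          rw [inner_sum]
          exact Finset.sum_congr rfl fun i _ => (hproj i _ (hv i)).symm
      _ ≤ ∑ i, ‖q i‖ * ‖v i‖ := Finset.sum_le_sum fun i _ => real_inner_le_norm _ _
  have hsq : (‖e‖ ^ 2) ^ 2 ≤ (C * S) * ‖e‖ ^ 2 :=
    calc (‖e‖ ^ 2) ^ 2 ≤ (∑ i, ‖q i‖ * ‖v i‖) ^ 2 := by gcongr
      _ ≤ S * ∑ i, ‖v i‖ ^ 2 := Finset.sum_mul_sq_le_sq_mul_sq _ _ _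
      _ ≤ S * (C * ‖e‖ ^ 2) := by gcongr
      _ = (C * S) * ‖e‖ ^ 2 := by ring
  rcases (sq_nonneg ‖e‖).eq_or_lt with h0 | hpos
  · rw [← h0]; positivity
  · nlinarith

end Projections

lemma norm_le_mul_norm_of_norm_sq_le_mul_inner {e p : V} {s : ℝ} (hs : 0 ≤ s)
    (h : ‖p‖ ^ 2 ≤ s * ⟪e, p⟫) : ‖p‖ ≤ s * ‖e‖ := by
  rcases (norm_nonneg p).eq_or_lt with h0 | hpos
  · rw [← h0]; positivity
  · have : ‖p‖ * ‖p‖ ≤ (s * ‖e‖) * ‖p‖ :=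
      calc ‖p‖ * ‖p‖ = ‖p‖ ^ 2 := (sq _).symm
        _ ≤ s * (‖e‖ * ‖p‖) := h.trans (by gcongr; exact real_inner_le_norm _ _)
        _ = (s * ‖e‖) * ‖p‖ := by ring
    exact le_of_mul_le_mul_right this hpos

lemma norm_sub_smul_sq_le {e p : V} {C s τ : ℝ} (hC : 0 < C) (hτ : 0 ≤ τ)
    (hlow : ‖e‖ ^ 2 ≤ C * ⟪e, p⟫) (hup : ‖p‖ ≤ s * ‖e‖) :
    ‖e - τ • p‖ ^ 2 ≤ (1 - 2 * τ / (2 + C) + s ^ 2 * τ ^ 2) * ‖e‖ ^ 2 := by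
  have hcross : 2 * τ / (2 + C) * ‖e‖ ^ 2 ≤ 2 * τ * ⟪e, p⟫ := by
    have hinner : 0 ≤ ⟪e, p⟫ := nonneg_of_mul_nonneg_right ((sq_nonneg _).trans hlow) hC
    rw [div_mul_eq_mul_div, div_le_iff₀ (by linarith)]
    nlinarith
  have hp : ‖p‖ ^ 2 ≤ s ^ 2 * ‖e‖ ^ 2 := by
    rw [← mul_pow]; exact pow_le_pow_left₀ (norm_nonneg _) hup 2
  rw [norm_sub_sq_real, norm_smul, real_inner_smul_right, Real.norm_of_nonneg hτ]
  nlinarith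

end

theorem asm_error_reduction_general {V : Type*} [NormedAddCommGroup V] [InnerProductSpace ℝ V]
    {N : ℕ} (Vs : Fin N → Submodule ℝ V)
    (P : Fin N → V →ₗ[ℝ] V)
    (hPmem : ∀ i (v : V), P i v ∈ Vs i)
    (hPproj : ∀ i (v : V), ∀ w ∈ Vs i, ⟪P i v, w⟫ = ⟪v, w⟫)
    (C₀ : ℝ) (hC₀ : 0 < C₀)
    (hdecomp : ∀ v : V, ∃ vi : Fin N → V, (∀ i, vi i ∈ Vs i) ∧ v = ∑ i, vi i ∧
      ∑ i, ⟪vi i, vi i⟫ ≤ C₀ * ⟪v, v⟫)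
    (E : Matrix (Fin N) (Fin N) ℝ)
    (hCS : ∀ i j, ∀ vi ∈ Vs i, ∀ vj ∈ Vs j,
      ⟪vi, vj⟫ ≤ E i j * Real.sqrt ⟪vi, vi⟫ * Real.sqrt ⟪vj, vj⟫)
    (τ : ℝ) (hτ : 0 < τ) :
    ∀ e : V, ⟪e - τ • ∑ i, P i e, e - τ • ∑ i, P i e⟫
      ≤ (1 - 2 * τ / (2 + C₀) + (matSpectralNorm E) ^ 2 * τ ^ 2) * ⟪e, e⟫ := by
  intro e
  have hcross : ⟪e, ∑ i, P i e⟫ = ∑ i, ‖P i e‖ ^ 2 :=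
    inner_sum_eq_sum_norm_sq_of_proj (hPmem · e) (hPproj · e)
  obtain ⟨v, hv, hev, hvC⟩ := hdecomp e
  simp only [real_inner_self_eq_norm_sq] at hvC ⊢
  have hlow : ‖e‖ ^ 2 ≤ C₀ * ⟪e, ∑ i, P i e⟫ := hcross ▸
    norm_sq_le_mul_sum_norm_sq_of_decomp (hPproj · e) hC₀.le v hv hev hvC
  have hup : ‖∑ i, P i e‖ ^ 2 ≤ matSpectralNorm E * ⟪e, ∑ i, P i e⟫ := hcross ▸
    norm_sum_sq_le_matSpectralNorm_mul E (P · e) fun i j => by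
      simpa only [← norm_eq_sqrt_real_inner] using hCS i j _ (hPmem i e) _ (hPmem j e)
  exact norm_sub_smul_sq_le hC₀ hτ.le hlow
    (norm_le_mul_norm_of_norm_sq_le_mul_inner (matSpectralNorm_nonneg E) hup)

/-- One-level additive Schwarz error reduction (Theorem 3.3):
`a((I−τP)e,(I−τP)e) ≤ (1 − 2τ/(2+C₀) + ‖ℰ‖₂² τ²) a(e,e)`. -/
theorem asm_error_reduction {V : Type*} [NormedAddCommGroup V] [InnerProductSpace ℝ V]
    {N : ℕ} (Vs : Fin N → Submodule ℝ V) (hclosed : ∀ i, IsClosed (Vs i : Set V))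
    (P : Fin N → V →ₗ[ℝ] V)
    (hPmem : ∀ i (v : V), P i v ∈ Vs i)
    (hPproj : ∀ i (v : V), ∀ w ∈ Vs i, ⟪P i v, w⟫ = ⟪v, w⟫)
    (C₀ : ℝ) (hC₀ : 0 < C₀)
    (hdecomp : ∀ v : V, ∃ vi : Fin N → V, (∀ i, vi i ∈ Vs i) ∧ v = ∑ i, vi i ∧
      ∑ i, ⟪vi i, vi i⟫ ≤ C₀ * ⟪v, v⟫)
    (E : Matrix (Fin N) (Fin N) ℝ)
    (hE0 : ∀ i j, 0 ≤ E i j) (hE1 : ∀ i j, E i j ≤ 1)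
    (hCS : ∀ i j, ∀ vi ∈ Vs i, ∀ vj ∈ Vs j,
      ⟪vi, vj⟫ ≤ E i j * Real.sqrt ⟪vi, vi⟫ * Real.sqrt ⟪vj, vj⟫)
    (τ : ℝ) (hτ : 0 < τ) :
    ∀ e : V, ⟪e - τ • ∑ i, P i e, e - τ • ∑ i, P i e⟫
      ≤ (1 - 2 * τ / (2 + C₀) + (matSpectralNorm E) ^ 2 * τ ^ 2) * ⟪e, e⟫ :=
  asm_error_reduction_general Vs P hPmem hPproj C₀ hC₀ hdecomp E hCS τ hτ
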